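/- For λ > 1 and μ > 0, the kernel K_Γ(z,w) = [[(1 − z w̄)^{−λ}, ∂_w̄ (1 − z w̄)^{−λ}],[∂_z (1 − z w̄)^{−λ}, ∂_z ∂_w̄ (1 − z w̄)^{−λ} + μ (1 − z w̄)^{−λ−2}]] on the unit disc 𝔻 × 𝔻 is positive definite. -/

import Mathlib

/-- A `2 × 2` matrix-valued kernel is positive definite on `Ω` if all its Gram sums
against vectors in `ℂ²` are nonnegative reals. -/
def MatrixPosDefKernel (Ω : Set ℂ) (K : ℂ → ℂ → Matrix (Fin 2) (Fin 2) ℂ) : Prop :=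
  ∀ (m : ℕ) (z : Fin m → ℂ), (∀ i, z i ∈ Ω) → ∀ v : Fin m → Fin 2 → ℂ,
    0 ≤ (∑ i, ∑ j, ∑ a, ∑ b, (starRingEnd ℂ) (v i a) * K (z i) (z j) a b * v j b).re ∧
    (∑ i, ∑ j, ∑ a, ∑ b, (starRingEnd ℂ) (v i a) * K (z i) (z j) a b * v j b).im = 0

/-!
Write `x = z w̄` and `c_n(s) = s (s+1) ⋯ (s+n-1) / n! = Ring.multichoose s n`, so that
`(1 - x)^{-s} = ∑ c_n(s) x^n` on the disc. Differentiating term by term (on coefficients: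
`(n+1) c_{n+1}(s) = s c_n(s+1)`) exhibits the kernel as
`∑ c_n(λ) φ_n(z) φ_n(w)^* + μ ∑ c_n(λ+2) ψ_n(z) ψ_n(w)^*`, where `φ_n(z) = (z^n, n z^{n-1})`
is the 1-jet of `z^n` and `ψ_n(z) = (0, z^n)`. All coefficients are positive since `λ > 0`, and
the Gram sum of such a kernel against `v` is `∑ c_n |∑ᵢ ⟨v_i, φ_n(z_i)⟩|² ≥ 0`.
-/

open Complex Metric ComplexConjugate
open scoped ComplexOrder

namespace MatrixPosDefKernel

variable {Ω : Set ℂ} {K L : ℂ → ℂ → Matrix (Fin 2) (Fin 2) ℂ}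

theorem iff_forall_nonneg : MatrixPosDefKernel Ω K ↔ ∀ (m : ℕ) (z : Fin m → ℂ), (∀ i, z i ∈ Ω) →
    ∀ v : Fin m → Fin 2 → ℂ,
      0 ≤ ∑ i, ∑ j, ∑ a, ∑ b, conj (v i a) * K (z i) (z j) a b * v j b := by
  simp only [MatrixPosDefKernel, Complex.nonneg_iff, eq_comm (a := (0 : ℝ))]

theorem add (hK : MatrixPosDefKernel Ω K) (hL : MatrixPosDefKernel Ω L) :
    MatrixPosDefKernel Ω (K + L) := by
  rw [iff_forall_nonneg] at *
  intro m z hz v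
  simpa only [Pi.add_apply, Matrix.add_apply, mul_add, add_mul, Finset.sum_add_distrib]
    using add_nonneg (hK m z hz v) (hL m z hz v)

theorem of_hasSum {ι : Type*} (c : ι → ℂ) (hc : ∀ n, 0 ≤ c n) (φ : ι → ℂ → Fin 2 → ℂ)
    (hK : ∀ z ∈ Ω, ∀ w ∈ Ω, ∀ a b,
      HasSum (fun n => c n * (φ n z a * conj (φ n w b))) (K z w a b)) :
    MatrixPosDefKernel Ω K := by
  rw [iff_forall_nonneg]
  intro m z hz v
  set S : ι → ℂ := fun n => ∑ i, ∑ a, conj (v i a) * φ n (z i) a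
  have hgram : HasSum (fun n => ∑ i, ∑ j, ∑ a, ∑ b,
      conj (v i a) * (c n * (φ n (z i) a * conj (φ n (z j) b))) * v j b)
      (∑ i, ∑ j, ∑ a, ∑ b, conj (v i a) * K (z i) (z j) a b * v j b) :=
    hasSum_sum fun i _ => hasSum_sum fun j _ => hasSum_sum fun a _ => hasSum_sum fun b _ =>
      ((hK _ (hz i) _ (hz j) a b).mul_left (conj (v i a))).mul_right (v j b)
  refine HasSum.nonneg (fun n => mul_nonneg (hc n) (mul_star_self_nonneg (S n)))
    (hgram.congr_fun fun n => ?_)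
  simp only [S, star_def, map_sum, map_mul, conj_conj]
  simp_rw [Finset.sum_mul_sum, Finset.mul_sum]
  refine Finset.sum_congr rfl fun i _ => Finset.sum_congr rfl fun j _ =>
    Finset.sum_congr rfl fun a _ => Finset.sum_congr rfl fun b _ => ?_
  ring

end MatrixPosDefKernel

namespace Ring

theorem succ_mul_multichoose_succ {R : Type*} [Field R] [CharZero R] (s : R) (n : ℕ) :
    (n + 1) * multichoose s (n + 1) = s * multichoose (s + 1) n := by
  have h := factorial_nsmul_multichoose_eq_ascPochhammer s (n + 1)
  have h' := factorial_nsmul_multichoose_eq_ascPochhammer (s + 1) n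
  rw [Polynomial.ascPochhammer_smeval_eq_eval, nsmul_eq_mul] at h h'
  rw [ascPochhammer_succ_left, Polynomial.eval_mul, Polynomial.eval_comp] at h
  simp only [Polynomial.eval_X, Polynomial.eval_add, Polynomial.eval_one] at h
  rw [← h', Nat.factorial_succ] at h
  apply mul_left_cancel₀ (Nat.cast_ne_zero.mpr n.factorial_ne_zero : (n.factorial : R) ≠ 0)
  push_cast at h
  linear_combination h

theorem multichoose_pos {s : ℝ} (hs : 0 < s) (n : ℕ) : 0 < multichoose s n := by
  have h := factorial_nsmul_multichoose_eq_ascPochhammer s n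
  rw [Polynomial.ascPochhammer_smeval_eq_eval, nsmul_eq_mul] at h
  exact pos_of_mul_pos_right (h ▸ ascPochhammer_pos n s hs) (Nat.cast_nonneg _)

theorem multichoose_ofReal_nonneg {s : ℝ} (hs : 0 < s) (n : ℕ) :
    0 ≤ multichoose (s : ℂ) n := by
  rw [← Complex.coe_algebraMap, ← map_multichoose]
  exact Complex.zero_le_real.mpr (multichoose_pos hs n).le

end Ring

theorem HasSum.of_nat_add_one {G : Type*} [AddCommGroup G] [TopologicalSpace G]
    [IsTopologicalAddGroup G] {f : ℕ → G} {g : G} (h0 : f 0 = 0)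
    (h : HasSum (fun n => f (n + 1)) g) : HasSum f g := by
  simpa [h0] using (hasSum_nat_add_iff 1).mp h

section BinomialSeries

variable (s : ℂ) {x : ℂ}

theorem hasSum_multichoose_mul_pow (hx : ‖x‖ < 1) :
    HasSum (fun n => Ring.multichoose s n * x ^ n) ((1 - x) ^ (-s)) := by
  have h := (one_div_one_sub_cpow_hasFPowerSeriesOnBall_zero s).hasSum
    (y := x) (by simpa [← ofReal_norm] using hx)
  simpa [FormalMultilinearSeries.ofScalars_apply_eq, Ring.multichoose_eq, cpow_neg, mul_comm]
    using h

theorem hasSum_succ_mul_multichoose_succ_mul_pow (hx : ‖x‖ < 1) :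
    HasSum (fun n => (n + 1) * Ring.multichoose s (n + 1) * x ^ n) (s * (1 - x) ^ (-s - 1)) := by
  have h := (hasSum_multichoose_mul_pow (s + 1) hx).mul_left s
  rw [neg_add'] at h
  exact h.congr_fun fun n => by rw [Ring.succ_mul_multichoose_succ, mul_assoc]

theorem hasSum_succ_sq_mul_multichoose_succ_mul_pow (hx : ‖x‖ < 1) :
    HasSum (fun n => (n + 1) ^ 2 * Ring.multichoose s (n + 1) * x ^ n)
      (s * (1 - x) ^ (-s - 1) + s * (s + 1) * x * (1 - x) ^ (-s - 2)) := by
  have h := (hasSum_succ_mul_multichoose_succ_mul_pow (s + 1) hx).mul_left (s * x)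
  rw [show -(s + 1) - 1 = -s - 2 by ring] at h
  have hsecond : HasSum (fun n => n * ((n + 1) * Ring.multichoose s (n + 1)) * x ^ n)
      (s * x * ((s + 1) * (1 - x) ^ (-s - 2))) := by
    refine .of_nat_add_one (by simp) (h.congr_fun fun n => ?_)
    have hshift := Ring.succ_mul_multichoose_succ s (n + 1)
    push_cast at hshift ⊢
    linear_combination ((n : ℂ) + 1) * x ^ (n + 1) * hshift
  have hsum := (hasSum_succ_mul_multichoose_succ_mul_pow s hx).add hsecond
  rw [show s * x * ((s + 1) * (1 - x) ^ (-s - 2)) = s * (s + 1) * x * (1 - x) ^ (-s - 2) by ring]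
    at hsum
  exact hsum.congr_fun fun n => by ring

end BinomialSeries

theorem norm_mul_conj_lt_one {z w : ℂ} (hz : z ∈ ball (0 : ℂ) 1) (hw : w ∈ ball (0 : ℂ) 1) :
    ‖z * conj w‖ < 1 := by
  rw [mem_ball_zero_iff] at hz hw
  rw [norm_mul, RCLike.norm_conj]
  nlinarith [norm_nonneg z, norm_nonneg w]

/-- `(f z, f' z)` for `f = (· ^ n)`; at `n = 0` the truncated exponent `n - 1` is multiplied
by `0`. -/
def monomialJet (n : ℕ) (z : ℂ) : Fin 2 → ℂ := ![z ^ n, n * z ^ (n - 1)]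

theorem matrixPosDefKernel_jet_one_sub_mul_conj_cpow_neg {s : ℝ} (hs : 0 < s) :
    MatrixPosDefKernel (ball (0 : ℂ) 1) (fun z w =>
      !![(1 - z * conj w) ^ (-(s : ℂ)),
         (s : ℂ) * z * (1 - z * conj w) ^ (-(s : ℂ) - 1);
         (s : ℂ) * conj w * (1 - z * conj w) ^ (-(s : ℂ) - 1),
         (s : ℂ) * (1 - z * conj w) ^ (-(s : ℂ) - 1)
           + (s : ℂ) * ((s : ℂ) + 1) * z * conj w * (1 - z * conj w) ^ (-(s : ℂ) - 2)]) := by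
  refine .of_hasSum _ (Ring.multichoose_ofReal_nonneg hs) monomialJet fun z hz w hw a b => ?_
  have hx := norm_mul_conj_lt_one hz hw
  set k := 1 - z * conj w
  fin_cases a <;> fin_cases b <;>
    simp only [Fin.zero_eta, Fin.mk_one, Fin.isValue, Matrix.of_apply, Matrix.cons_val',
      Matrix.cons_val_zero, Matrix.cons_val_one, Matrix.empty_val', Matrix.cons_val_fin_one,
      monomialJet]
  · simpa [mul_pow] using hasSum_multichoose_mul_pow s hx
  · refine .of_nat_add_one (by simp) ?_
    rw [show (s : ℂ) * z * k ^ (-(s : ℂ) - 1) = z * ((s : ℂ) * k ^ (-(s : ℂ) - 1)) by ring]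
    refine ((hasSum_succ_mul_multichoose_succ_mul_pow s hx).mul_left z).congr_fun fun n => ?_
    simp only [Nat.add_sub_cancel, map_mul, map_natCast, map_pow]
    push_cast
    ring
  · refine .of_nat_add_one (by simp) ?_
    rw [show (s : ℂ) * conj w * k ^ (-(s : ℂ) - 1) = conj w * ((s : ℂ) * k ^ (-(s : ℂ) - 1)) by
      ring]
    refine ((hasSum_succ_mul_multichoose_succ_mul_pow s hx).mul_left (conj w)).congr_fun
      fun n => ?_
    simp only [Nat.add_sub_cancel, map_pow]
    push_cast
    ring
  · refine .of_nat_add_one (by simp) ?_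
    rw [mul_assoc _ z]
    refine (hasSum_succ_sq_mul_multichoose_succ_mul_pow s hx).congr_fun fun n => ?_
    simp only [Nat.add_sub_cancel, map_mul, map_natCast, map_pow]
    push_cast
    ring

theorem matrixPosDefKernel_corner_one_sub_mul_conj_cpow_neg {s μ : ℝ} (hs : 0 < s)
    (hμ : 0 ≤ μ) :
    MatrixPosDefKernel (ball (0 : ℂ) 1) (fun z w =>
      !![0, 0; 0, (μ : ℂ) * (1 - z * conj w) ^ (-(s : ℂ))]) := by
  refine .of_hasSum (fun n => μ * Ring.multichoose (s : ℂ) n)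
    (fun n => mul_nonneg (Complex.zero_le_real.mpr hμ) (Ring.multichoose_ofReal_nonneg hs n))
    (fun n z => ![0, z ^ n]) fun z hz w hw a b => ?_
  fin_cases a <;> fin_cases b
  · simp
  · simp
  · simp
  · simpa [mul_pow, mul_assoc] using
      (hasSum_multichoose_mul_pow s (norm_mul_conj_lt_one hz hw)).mul_left (μ : ℂ)

/-- For `λ > 1` and `μ > 0`, the kernel
`K_Γ(z,w) = [[(1-zw̄)^{-λ}, ∂_w̄ (1-zw̄)^{-λ}],[∂_z (1-zw̄)^{-λ}, ∂_z∂_w̄ (1-zw̄)^{-λ} + μ(1-zw̄)^{-λ-2}]]`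
(the derivatives computed explicitly) is positive definite on the unit disc. -/
theorem homogeneous_rank_two_kernel_posdef (lam mu : ℝ) (hlam : 1 < lam) (hmu : 0 < mu) :
    MatrixPosDefKernel (Metric.ball (0 : ℂ) 1) (fun z w =>
      !![(1 - z * (starRingEnd ℂ) w) ^ (-(lam : ℂ)),
         (lam : ℂ) * z * (1 - z * (starRingEnd ℂ) w) ^ (-(lam : ℂ) - 1);
         (lam : ℂ) * (starRingEnd ℂ) w * (1 - z * (starRingEnd ℂ) w) ^ (-(lam : ℂ) - 1),
         (lam : ℂ) * (1 - z * (starRingEnd ℂ) w) ^ (-(lam : ℂ) - 1)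
           + (lam : ℂ) * ((lam : ℂ) + 1) * z * (starRingEnd ℂ) w *
               (1 - z * (starRingEnd ℂ) w) ^ (-(lam : ℂ) - 2)
           + (mu : ℂ) * (1 - z * (starRingEnd ℂ) w) ^ (-(lam : ℂ) - 2)]) := by
  have hK := (matrixPosDefKernel_jet_one_sub_mul_conj_cpow_neg (by linarith : 0 < lam)).add
    (matrixPosDefKernel_corner_one_sub_mul_conj_cpow_neg (by linarith : 0 < lam + 2) hmu.le)
  rw [show -(((lam + 2 : ℝ)) : ℂ) = -(lam : ℂ) - 2 by push_cast; ring] at hK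
  convert hK using 1
  funext z w
  ext a b
  fin_cases a <;> fin_cases b <;> simp
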